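/- arXiv:1012.4683 — 8 statements merged into one kernel-verified Lean document; each statement's English description precedes it below -/
import Mathlib

section
/- The bracket on ℂ[x,y] × ℂ[x,y] defined by ⟦(a₁,b₁),(a₂,b₂)⟧ = (a₁·∂_y a₂ − a₂·∂_y a₁ + x·b₂·∂_x a₁ − x·b₁·∂_x a₂ , a₁·∂_y b₂ − a₂·∂_y b₁ + x·b₂·∂_x b₁ − x·b₁·∂_x b₂) is a Lie bracket: it is ℂ-bilinear, alternating (⟦α,α⟧ = 0), and satisfies the Jacobi identity ⟦α,⟦β,γ⟧⟧ + ⟦β,⟦γ,α⟧⟧ + ⟦γ,⟦α,β⟧⟧ = 0 for all α,β,γ ∈ ℂ[x,y]². -/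
/-!
Write `ρ α = a ∂_y - x b ∂_x` for the derivation of `ℂ[x,y]` that the Poisson structure attaches to
`α = a·(dx/x) + b·dy`. Then `⟦α, β⟧ = ρ α β - ρ β α`, with derivations acting componentwise on pairs,
and `ρ ⟦α, β⟧ = [ρ α, ρ β]`, as one checks on the generators `x, y`. For any bracket of the form
`ρ α β - ρ β α` with `ρ` bracket-preserving, the Jacobi identity is formal: expanding
`ρ ⟦β, γ⟧ = ρ β ρ γ - ρ γ ρ β`, the twelve resulting terms cancel in pairs.
-/

open MvPolynomial

/-- `ℂ[x,y]`, with `X 0 = x`, `X 1 = y`. -/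
abbrev A : Type := MvPolynomial (Fin 2) ℂ

/-- The logarithmic Koszul bracket of the Poisson structure `{x,y} = x` on `ℂ[x,y]`,
written in the coordinates where `(a,b)` represents `a·(dx/x) + b·dy`. -/
noncomputable def logKoszul (α β : A × A) : A × A :=
  (α.1 * pderiv 1 β.1 - β.1 * pderiv 1 α.1 + X 0 * β.2 * pderiv 0 α.1
      - X 0 * α.2 * pderiv 0 β.1,
   α.1 * pderiv 1 β.2 - β.1 * pderiv 1 α.2 + X 0 * β.2 * pderiv 0 α.2
      - X 0 * α.2 * pderiv 0 β.2)

namespace Prod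

variable {R L M N : Type*} [LieRing L] [AddCommGroup M] [AddCommGroup N]
  [LieRingModule L M] [LieRingModule L N]

instance instLieRingModule : LieRingModule L (M × N) where
  bracket x m := (⁅x, m.1⁆, ⁅x, m.2⁆)
  add_lie x y m := by ext <;> exact add_lie ..
  lie_add x m n := by ext <;> exact lie_add ..
  leibniz_lie x y m := by ext <;> exact leibniz_lie ..

@[simp]
theorem fst_lie (x : L) (m : M × N) : ⁅x, m⁆.1 = ⁅x, m.1⁆ := rfl

@[simp]
theorem snd_lie (x : L) (m : M × N) : ⁅x, m⁆.2 = ⁅x, m.2⁆ := rfl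

instance instLieModule [CommRing R] [LieAlgebra R L] [Module R M] [Module R N]
    [LieModule R L M] [LieModule R L N] : LieModule R L (M × N) where
  smul_lie t x m := by ext <;> exact smul_lie ..
  lie_smul t x m := by ext <;> exact lie_smul ..

end Prod

section AnchoredBracket

variable {R L M F : Type*} [LieRing L] [AddCommGroup M] [LieRingModule L M]

def anchoredBracket (ρ : M → L) (α β : M) : M := ⁅ρ α, β⁆ - ⁅ρ β, α⁆

theorem anchoredBracket_self (ρ : M → L) (α : M) : anchoredBracket ρ α α = 0 :=
  sub_self _

theorem anchoredBracket_jacobi (ρ : M → L)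
    (hρ : ∀ α β, ρ (anchoredBracket ρ α β) = ⁅ρ α, ρ β⁆) (α β γ : M) :
    anchoredBracket ρ α (anchoredBracket ρ β γ) + anchoredBracket ρ β (anchoredBracket ρ γ α) +
      anchoredBracket ρ γ (anchoredBracket ρ α β) = 0 := by
  simp only [anchoredBracket] at hρ ⊢
  simp only [hρ, lie_sub, lie_lie]
  abel

variable [FunLike F M L]

theorem anchoredBracket_add_left [AddHomClass F M L] (ρ : F) (α β γ : M) :
    anchoredBracket ρ (α + β) γ = anchoredBracket ρ α γ + anchoredBracket ρ β γ := by
  simp only [anchoredBracket, map_add, add_lie, lie_add]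
  abel

theorem anchoredBracket_add_right [AddHomClass F M L] (ρ : F) (α β γ : M) :
    anchoredBracket ρ α (β + γ) = anchoredBracket ρ α β + anchoredBracket ρ α γ := by
  simp only [anchoredBracket, map_add, add_lie, lie_add]
  abel

variable [CommRing R] [LieAlgebra R L] [Module R M] [LieModule R L M]

theorem anchoredBracket_smul_left [LinearMapClass F R M L] (ρ : F) (c : R) (α β : M) :
    anchoredBracket ρ (c • α) β = c • anchoredBracket ρ α β := by
  simp only [anchoredBracket, map_smul, smul_lie, lie_smul, smul_sub]

theorem anchoredBracket_smul_right [LinearMapClass F R M L] (ρ : F) (c : R) (α β : M) :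
    anchoredBracket ρ α (c • β) = c • anchoredBracket ρ α β := by
  simp only [anchoredBracket, map_smul, smul_lie, lie_smul, smul_sub]

end AnchoredBracket

/-- The Poisson anchor on logarithmic forms: `dx/x ↦ ∂_y`, `dy ↦ -x ∂_x`. -/
noncomputable def anchor : A × A →ₗ[ℂ] Derivation ℂ A A :=
  ((LinearMap.toSpanSingleton A (Derivation ℂ A A) (pderiv 1)).coprod
    (LinearMap.toSpanSingleton A (Derivation ℂ A A) (-((X 0 : A) • pderiv 0)))).restrictScalars ℂ

theorem anchor_apply (α : A × A) (p : A) :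
    anchor α p = α.1 * pderiv 1 p - X 0 * α.2 * pderiv 0 p := by
  simp only [anchor, LinearMap.restrictScalars_apply, LinearMap.coprod_apply,
    LinearMap.toSpanSingleton_apply, Derivation.add_apply, Derivation.smul_apply,
    Derivation.neg_apply, smul_eq_mul]
  ring

@[simp]
theorem anchor_apply_X_zero (α : A × A) : anchor α (X 0) = -(X 0 * α.2) := by
  simp [anchor_apply]

@[simp]
theorem anchor_apply_X_one (α : A × A) : anchor α (X 1) = α.1 := by
  simp [anchor_apply]

theorem logKoszul_eq_anchoredBracket : logKoszul = anchoredBracket anchor := by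
  funext α β
  refine Prod.ext ?_ ?_ <;>
  · simp only [logKoszul, anchoredBracket, Prod.fst_sub, Prod.snd_sub, Prod.fst_lie,
      Prod.snd_lie, Derivation.bracket_eq_fun, anchor_apply]
    ring

theorem anchor_anchoredBracket (α β : A × A) :
    anchor (anchoredBracket anchor α β) = ⁅anchor α, anchor β⁆ := by
  refine derivation_ext fun i => ?_
  fin_cases i
  · -- the Leibniz terms `x α₂ β₂` coming from `anchor α x = -x α₂` cancel
    simp only [Fin.zero_eta, anchoredBracket, map_sub, map_neg, Derivation.coe_sub, Pi.sub_apply,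
      anchor_apply_X_zero, Prod.snd_lie, Derivation.bracket_eq_fun,
      Derivation.commutator_apply, Derivation.leibniz, smul_eq_mul]
    ring
  · simp [Derivation.commutator_apply, anchoredBracket]

/-- The bracket `⟦−,−⟧` on `ℂ[x,y]²` is a Lie bracket: it is ℂ-bilinear, alternating,
and satisfies the Jacobi identity. -/
theorem logKoszul_is_lie_bracket :
    (∀ α β γ : A × A, logKoszul (α + β) γ = logKoszul α γ + logKoszul β γ) ∧
    (∀ α β γ : A × A, logKoszul α (β + γ) = logKoszul α β + logKoszul α γ) ∧
    (∀ (c : ℂ) (α β : A × A), logKoszul (c • α) β = c • logKoszul α β) ∧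
    (∀ (c : ℂ) (α β : A × A), logKoszul α (c • β) = c • logKoszul α β) ∧
    (∀ α : A × A, logKoszul α α = 0) ∧
    (∀ α β γ : A × A,
      logKoszul α (logKoszul β γ) + logKoszul β (logKoszul γ α) +
        logKoszul γ (logKoszul α β) = 0) := by
  rw [logKoszul_eq_anchoredBracket]
  exact ⟨anchoredBracket_add_left anchor, anchoredBracket_add_right anchor,
    anchoredBracket_smul_left anchor, anchoredBracket_smul_right anchor,
    anchoredBracket_self anchor, anchoredBracket_jacobi anchor anchor_anchoredBracket⟩
end

section
/- The ℂ[x,y]-linear map H̃ : ℂ[x,y]² → Der(ℂ[x,y]) sending (a,b) to the derivation a·∂_y − x·b·∂_x is a homomorphism of Lie algebras: for all α, β ∈ ℂ[x,y]², H̃(⟦α,β⟧) = H̃(α)∘H̃(β) − H̃(β)∘H̃(α) as derivations of ℂ[x,y], where ⟦(a₁,b₁),(a₂,b₂)⟧ = (a₁·∂_y a₂ − a₂·∂_y a₁ + x·b₂·∂_x a₁ − x·b₁·∂_x a₂ , a₁·∂_y b₂ − a₂·∂_y b₁ + x·b₂·∂_x b₁ − x·b₁·∂_x b₂). -/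
open MvPolynomial

/-- The logarithmic Hamiltonian map `H̃(a,b) = a·∂_y − x·b·∂_x`, viewed as sending a pair
`(a,b)` (representing `a·(dx/x) + b·dy`) to the corresponding derivation of `ℂ[x,y]`. -/
noncomputable def Ht (α : A × A) (f : A) : A :=
  α.1 * pderiv 1 f - X 0 * α.2 * pderiv 0 f

namespace Ht

noncomputable def derivation (α : A × A) : Derivation ℂ A A :=
  α.1 • pderiv 1 - (X 0 * α.2) • pderiv 0

theorem coe_derivation (α : A × A) : ⇑(derivation α) = Ht α := by
  funext f
  simp [derivation, Ht]

theorem apply_X_zero (α : A × A) : Ht α (X 0) = -(X 0 * α.2) := by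
  simp [Ht]

theorem apply_X_one (α : A × A) : Ht α (X 1) = α.1 := by
  simp [Ht]

end Ht

/-- The logarithmic Hamiltonian map `H̃` is a homomorphism of Lie algebras:
`H̃(⟦α,β⟧) = H̃(α)∘H̃(β) − H̃(β)∘H̃(α)` as derivations of `ℂ[x,y]`. -/
theorem Ht_lie_hom (α β : A × A) :
    Ht (logKoszul α β) = (fun f => Ht α (Ht β f) - Ht β (Ht α f)) := by
  -- Both sides are derivations (the right one a commutator of two), so they agree once they
  -- agree on the generators `x` and `y`.
  suffices Ht.derivation (logKoszul α β) = ⁅Ht.derivation α, Ht.derivation β⁆ by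
    funext f
    rw [← Ht.coe_derivation, this, Derivation.commutator_apply, Ht.coe_derivation, Ht.coe_derivation]
  refine derivation_ext (Fin.forall_fin_two.2 ⟨?_, ?_⟩) <;>
    simp only [Derivation.commutator_apply, Ht.coe_derivation, Ht.apply_X_zero, Ht.apply_X_one]
  · simp only [Ht, logKoszul, map_neg, Derivation.leibniz, smul_eq_mul, pderiv_X_self,
      pderiv_X_of_ne zero_ne_one]
    ring
  · simp only [Ht, logKoszul]
    ring
end

section
/- The ℂ-linear map d¹ : ℂ[x,y] × ℂ[x,y] → ℂ[x,y] given by d¹(f₁,f₂) = x·∂_x f₁ + ∂_y f₂ is surjective; hence the second logarithmic Poisson cohomology space H²_PS of the Poisson bracket {x,y} = x on ℂ[x,y] vanishes. -/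
open MvPolynomial

namespace MvPolynomial

variable {σ R : Type*}

theorem pderiv_monomial_add_single [CommSemiring R] (i : σ) (d : σ →₀ ℕ) (c : R) :
    pderiv i (monomial (d + Finsupp.single i 1) c) = monomial d (c * (d i + 1)) := by
  simp

theorem pderiv_surjective [CommSemiring R] [Algebra ℚ R] (i : σ) :
    Function.Surjective (pderiv i : MvPolynomial σ R → MvPolynomial σ R) := by
  intro g
  induction g using MvPolynomial.induction_on' with
  | monomial d c =>
    refine ⟨monomial (d + Finsupp.single i 1) (((d i : ℚ) + 1)⁻¹ • c), ?_⟩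
    rw [pderiv_monomial_add_single]
    congr 1
    have hcast : ((d i : R) + 1) = algebraMap ℚ R ((d i : ℚ) + 1) := by simp
    have hd : ((d i : ℚ) + 1) ≠ 0 := Nat.cast_add_one_ne_zero (d i)
    rw [hcast, mul_comm, ← Algebra.smul_def, smul_smul, mul_inv_cancel₀ hd, one_smul]
  | add p q hp hq =>
    obtain ⟨P, rfl⟩ := hp
    obtain ⟨Q, rfl⟩ := hq
    exact ⟨P + Q, map_add _ _ _⟩

end MvPolynomial

/-- The map `d¹(f₁,f₂) = x·∂_x f₁ + ∂_y f₂`, the top differential of the logarithmic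
Poisson complex of the bracket `{x,y} = x` along the ideal `(x)`, is surjective;
hence the second logarithmic Poisson cohomology space `H²_PS` vanishes. -/
theorem d1_PS_surjective :
    Function.Surjective
      (fun p : A × A => X 0 * pderiv 0 p.1 + pderiv 1 p.2) := by
  intro g
  obtain ⟨F, hF⟩ := pderiv_surjective (1 : Fin 2) g
  exact ⟨(0, F), by simp [hF]⟩
end

section
/- For every pair (f₁,f₂) ∈ ℂ[x,y]² satisfying x·∂_x f₁ + ∂_y f₂ = 0, there exists a unique constant c ∈ ℂ such that the pair (f₁, f₂ − c) lies in the image of the map f ↦ (∂_y f, −x·∂_x f); hence the first logarithmic Poisson cohomology space H¹_PS of the Poisson bracket {x,y} = x on ℂ[x,y] is isomorphic to ℂ. -/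
/-!
Integrate `f₁` in `y` to get `g₀` with `∂_y g₀ = f₁`. Since partial derivatives commute, the
cocycle condition says that `h := f₂ + x ∂_x g₀` is killed by `∂_y`, so `h` is a polynomial in `x`
alone. The Euler operator `x ∂_x` multiplies `xᵃ` by `a`, so `h - h(0) = x ∂_x φ` with `φ` again
independent of `y`, and `g = g₀ - φ` exhibits `(f₁, f₂ - h(0))` as a coboundary. Conversely the
second component `-x ∂_x g` of a coboundary has no constant term, which forces `c = f₂(0,0)`.
-/

open MvPolynomial

namespace MvPolynomial

variable {σ R : Type*}

theorem pderiv_pderiv_comm [CommRing R] (i j : σ) (f : MvPolynomial σ R) :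
    pderiv i (pderiv j f) = pderiv j (pderiv i f) := by
  classical
  have hcomm : ⁅pderiv i, pderiv j⁆ = (0 : Derivation R (MvPolynomial σ R) (MvPolynomial σ R)) :=
    derivation_ext fun k => by
      rw [Derivation.commutator_apply, pderiv_X, pderiv_X]
      simp [Pi.single_apply, apply_ite]
  have := congr($hcomm f)
  rw [Derivation.commutator_apply] at this
  exact sub_eq_zero.mp this

variable [Field R] [CharZero R]

theorem exists_pderiv_eq (i : σ) (f : MvPolynomial σ R) : ∃ g, pderiv i g = f := by
  induction f using MvPolynomial.induction_on' with
  | monomial s a =>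
    refine ⟨monomial (s + Finsupp.single i 1) (a / (s i + 1)), ?_⟩
    rw [pderiv_monomial, add_tsub_cancel_right]
    congr 1
    simp only [Finsupp.add_apply, Finsupp.single_eq_same, Nat.cast_add, Nat.cast_one]
    exact div_mul_cancel₀ a (Nat.cast_add_one_ne_zero (s i))
  | add p q hp hq =>
    obtain ⟨g, rfl⟩ := hp
    obtain ⟨g', rfl⟩ := hq
    exact ⟨g + g', map_add _ g g'⟩

theorem notMem_vars_of_pderiv_eq_zero {i : σ} {f : MvPolynomial σ R} (hf : pderiv i f = 0) :
    i ∉ f.vars := by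
  rw [mem_vars_iff_mem_support]
  rintro ⟨s, hs, hsi⟩
  have hcoeff := coeff_pderiv (i := i) f (s - Finsupp.single i 1)
  rw [hf, coeff_zero, Finsupp.sub_add_single_one_cancel (Finsupp.mem_support_iff.mp hsi)] at hcoeff
  exact mem_support_iff.mp hs
    ((mul_eq_zero.mp hcoeff.symm).resolve_right (Nat.cast_add_one_ne_zero _))

theorem exists_X_mul_pderiv_eq {i : σ} {h : MvPolynomial σ R} (hh : ∀ s ∈ h.support, s i ≠ 0) :
    ∃ φ, φ.support ⊆ h.support ∧ X i * pderiv i φ = h := by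
  classical
  refine ⟨∑ s ∈ h.support, monomial s (coeff s h / s i), ?_, ?_⟩
  · refine support_sum.trans (Finset.biUnion_subset.mpr fun s hs => ?_)
    exact support_monomial_subset.trans (Finset.singleton_subset_iff.mpr hs)
  · conv_rhs => rw [h.as_sum]
    rw [map_sum, Finset.mul_sum]
    refine Finset.sum_congr rfl fun s hs => ?_
    rw [X_mul_pderiv_monomial, smul_monomial, nsmul_eq_mul,
      mul_div_cancel₀ _ (Nat.cast_ne_zero.mpr (hh s hs))]

theorem exists_X_zero_mul_pderiv_eq_sub_C {h : MvPolynomial (Fin 2) R} (hh : pderiv 1 h = 0) :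
    ∃ φ, pderiv 1 φ = 0 ∧ X 0 * pderiv 0 φ = h - C (constantCoeff h) := by
  classical
  have hy : (1 : Fin 2) ∉ (h - C (constantCoeff h)).vars := fun h1 =>
    notMem_vars_of_pderiv_eq_zero hh (by simpa using vars_sub_subset h h1)
  have hx : ∀ s ∈ (h - C (constantCoeff h)).support, s 0 ≠ 0 := by
    intro s hs hs0
    have hs1 : s 1 = 0 := Finsupp.notMem_support_iff.mp fun h1 =>
      hy ((mem_vars_iff_mem_support _).mpr ⟨s, hs, h1⟩)
    obtain rfl : s = 0 := Finsupp.ext fun k => by fin_cases k <;> assumption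
    simp [constantCoeff_eq] at hs
  obtain ⟨φ, hsupp, hφ⟩ := exists_X_mul_pderiv_eq hx
  refine ⟨φ, pderiv_eq_zero_of_notMem_vars fun h1 => hy ?_, hφ⟩
  obtain ⟨s, hs, h1s⟩ := (mem_vars_iff_mem_support _).mp h1
  exact (mem_vars_iff_mem_support _).mpr ⟨s, hsupp hs, h1s⟩

end MvPolynomial

/-- For every cocycle `(f₁,f₂)` of the logarithmic Poisson complex of `{x,y} = x`
(i.e. `x·∂_x f₁ + ∂_y f₂ = 0`), there is a unique constant `c ∈ ℂ` such that
`(f₁, f₂ − c)` lies in the image of `d⁰ : f ↦ (∂_y f, −x·∂_x f)`; hence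
`H¹_PS ≅ ℂ` for the bracket `{x,y} = x`. -/
theorem H1_PS_eq_C (f₁ f₂ : A) (h : X 0 * pderiv 0 f₁ + pderiv 1 f₂ = 0) :
    ∃! c : ℂ, ∃ g : A, (f₁, f₂ - C c) = (pderiv 1 g, -(X 0 * pderiv 0 g)) := by
  obtain ⟨g₀, hg₀⟩ := exists_pderiv_eq 1 f₁
  have hy_free : pderiv 1 (f₂ + X 0 * pderiv 0 g₀) = 0 := by
    rw [map_add, pderiv_mul, pderiv_X_of_ne zero_ne_one, zero_mul, zero_add,
      pderiv_pderiv_comm, hg₀, ← h, add_comm]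
  obtain ⟨φ, hφ₁, hφ₀⟩ := exists_X_zero_mul_pderiv_eq_sub_C hy_free
  refine ⟨constantCoeff f₂, ⟨g₀ - φ, ?_⟩, ?_⟩
  · simp only [map_add, map_mul, constantCoeff_X, zero_mul, add_zero] at hφ₀
    rw [map_sub, map_sub, hg₀, hφ₁, sub_zero, mul_sub, hφ₀]
    congr 1
    ring
  · rintro c ⟨g, hg⟩
    have := congrArg constantCoeff (Prod.ext_iff.mp hg).2
    simp only [map_sub, map_neg, map_mul, constantCoeff_X, constantCoeff_C, zero_mul,
      neg_zero] at this
    exact (sub_eq_zero.mp this).symm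
end

section
/- For every pair (f₁,f₂) ∈ ℂ[x,y]² satisfying x·∂_x f₂ − ∂_y f₁ = 0, there exists a unique constant c ∈ ℂ such that the pair (f₁ − c, f₂) lies in the image of the map f ↦ (x·∂_x f, ∂_y f); hence the first logarithmic De Rham cohomology space H¹_DS of ℂ[x,y] along the ideal (x) is isomorphic to ℂ. -/
/-!
In coefficients, the cocycle condition reads `m₀ · a_m(f₂) = (m₁ + 1) · a_{m + e_y}(f₁)`.
A primitive `g` is then defined coefficientwise: off the `y`-axis `x∂_x g = f₁` forces
`a_m(g) = a_m(f₁) / m₀`, on the `y`-axis `∂_y g = f₂` forces `a_m(g) = a_{m - e_y}(f₂) / m₁`,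
and the cocycle condition makes the two prescriptions compatible. The only obstruction is the
constant term of `f₁`, which `x∂_x` cannot produce; this also gives uniqueness of `c`.
-/

open MvPolynomial

namespace MvPolynomial

variable {σ R : Type*}

theorem coeff_X_mul_pderiv [CommSemiring R] (i : σ) (p : MvPolynomial σ R) (m : σ →₀ ℕ) :
    coeff m (X i * pderiv i p) = coeff m p * m i := by
  induction p using MvPolynomial.induction_on' with
  | add p q hp hq => rw [map_add, mul_add, coeff_add, coeff_add, hp, hq, add_mul]
  | monomial n a =>
    classical
    rw [X_mul_pderiv_monomial, coeff_smul, coeff_monomial]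
    split_ifs with h
    · rw [h, nsmul_eq_mul, mul_comm]
    · rw [smul_zero, zero_mul]

theorem eq_coeff_zero_of_sub_C_eq_X_mul [CommRing R] {f p : MvPolynomial σ R} {c : R} {i : σ}
    (h : f - C c = X i * p) : c = coeff 0 f := by
  have := congrArg constantCoeff h
  rw [map_sub, constantCoeff_C, map_mul, constantCoeff_X, zero_mul, constantCoeff_eq] at this
  exact (sub_eq_zero.mp this).symm

end MvPolynomial

section Cocycle

variable {f₁ f₂ : A}

theorem coeff_mul_eq_of_cocycle (h : X 0 * pderiv 0 f₂ - pderiv 1 f₁ = 0) (m : Fin 2 →₀ ℕ) :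
    coeff m f₂ * m 0 = coeff (m + Finsupp.single 1 1) f₁ * (m 1 + 1) := by
  rw [← coeff_X_mul_pderiv, ← coeff_pderiv, sub_eq_zero.mp h]

/-- Since `∂_y f₁ = x ∂_x f₂` is divisible by `x`, `f₁` is constant modulo `x`. -/
theorem coeff_eq_zero_of_cocycle (h : X 0 * pderiv 0 f₂ - pderiv 1 f₁ = 0) {m : Fin 2 →₀ ℕ}
    (hm : m ≠ 0) (hm₀ : m 0 = 0) : coeff m f₁ = 0 := by
  have hm₁ : m 1 ≠ 0 := fun hm₁ => hm (by ext j; fin_cases j <;> assumption)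
  have hshift := coeff_mul_eq_of_cocycle h (m - Finsupp.single 1 1)
  rw [Finsupp.sub_add_single_one_cancel hm₁, Finsupp.tsub_apply,
    Finsupp.single_eq_of_ne (by decide), hm₀, Nat.sub_zero, Nat.cast_zero, mul_zero] at hshift
  exact (mul_eq_zero.mp hshift.symm).resolve_right (Nat.cast_add_one_ne_zero _)

/-- Division by `0` returns `0`; in particular the constant coefficient is `0`. -/
noncomputable def primitiveCoeff (f₁ f₂ : A) (m : Fin 2 →₀ ℕ) : ℂ :=
  if m 0 = 0 then coeff (m - Finsupp.single 1 1) f₂ / m 1 else coeff m f₁ / m 0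

theorem support_primitiveCoeff_subset (f₁ f₂ : A) :
    Function.support (primitiveCoeff f₁ f₂) ⊆
      ↑f₁.support ∪ (· + Finsupp.single 1 1) '' ↑f₂.support := by
  intro m hm
  rw [Function.mem_support, primitiveCoeff] at hm
  split_ifs at hm with hm₀
  · obtain ⟨hcoeff, hm₁⟩ := div_ne_zero_iff.mp hm
    exact Or.inr ⟨m - Finsupp.single 1 1, mem_support_iff.mpr hcoeff,
      Finsupp.sub_add_single_one_cancel (Nat.cast_ne_zero.mp hm₁)⟩
  · exact Or.inl (mem_support_iff.mpr (div_ne_zero_iff.mp hm).1)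

noncomputable def primitive (f₁ f₂ : A) : A :=
  AddMonoidAlgebra.ofCoeff <| Finsupp.ofSupportFinite (primitiveCoeff f₁ f₂)
    (((Finset.finite_toSet _).union ((Finset.finite_toSet _).image _)).subset
      (support_primitiveCoeff_subset f₁ f₂))

theorem coeff_primitive (f₁ f₂ : A) (m : Fin 2 →₀ ℕ) :
    coeff m (primitive f₁ f₂) = primitiveCoeff f₁ f₂ m := rfl

theorem pderiv_one_primitive (h : X 0 * pderiv 0 f₂ - pderiv 1 f₁ = 0) :
    pderiv 1 (primitive f₁ f₂) = f₂ := by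
  ext m
  rw [coeff_pderiv, coeff_primitive, primitiveCoeff]
  have hm₁ : (((m + Finsupp.single 1 1 : Fin 2 →₀ ℕ) 1 : ℕ) : ℂ) = m 1 + 1 := by simp
  have hm₀ : (m + Finsupp.single 1 1 : Fin 2 →₀ ℕ) 0 = m 0 := by simp
  rw [hm₀, hm₁]
  split_ifs with h₀
  · rw [add_tsub_cancel_right, div_mul_cancel₀ _ (Nat.cast_add_one_ne_zero _)]
  · rw [div_mul_eq_mul_div, ← coeff_mul_eq_of_cocycle h,
      mul_div_cancel_right₀ _ (Nat.cast_ne_zero.mpr h₀)]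

theorem X_mul_pderiv_zero_primitive (h : X 0 * pderiv 0 f₂ - pderiv 1 f₁ = 0) :
    X 0 * pderiv 0 (primitive f₁ f₂) = f₁ - C (coeff 0 f₁) := by
  ext m
  rw [coeff_X_mul_pderiv, coeff_primitive, primitiveCoeff, coeff_sub, coeff_C]
  split_ifs with h₀ hm hm
  · rw [h₀, Nat.cast_zero, mul_zero, hm, sub_self]
  · rw [h₀, Nat.cast_zero, mul_zero, sub_zero, coeff_eq_zero_of_cocycle h (Ne.symm hm) h₀]
  · exact absurd (by rw [← hm]; rfl) h₀
  · rw [sub_zero, div_mul_cancel₀ _ (Nat.cast_ne_zero.mpr h₀)]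

end Cocycle

/-- For every cocycle `(f₁,f₂)` of the logarithmic De Rham complex of `ℂ[x,y]` along `(x)`
(i.e. `x·∂_x f₂ − ∂_y f₁ = 0`), there is a unique constant `c ∈ ℂ` such that
`(f₁ − c, f₂)` lies in the image of `d⁰ : f ↦ (x·∂_x f, ∂_y f)`; hence `H¹_DS ≅ ℂ`. -/
theorem H1_DS_eq_C (f₁ f₂ : A) (h : X 0 * pderiv 0 f₂ - pderiv 1 f₁ = 0) :
    ∃! c : ℂ, ∃ g : A, (f₁ - C c, f₂) = (X 0 * pderiv 0 g, pderiv 1 g) := by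
  refine ⟨coeff 0 f₁, ⟨primitive f₁ f₂, ?_⟩, ?_⟩
  · rw [X_mul_pderiv_zero_primitive h, pderiv_one_primitive h]
  · rintro c ⟨g, hg⟩
    exact eq_coeff_zero_of_sub_C_eq_X_mul (congrArg Prod.fst hg)
end

section
/- The ℂ-linear map d¹ : ℂ[x,y] × ℂ[x,y] → ℂ[x,y] given by d¹(f₁,f₂) = x·∂_x f₁ + x·∂_y f₂ − f₁ is surjective; hence the second Poisson cohomology space H²_P of the Poisson bracket {x,y} = x on ℂ[x,y] vanishes. -/
/-!
The map `d¹` is linear, so it suffices to hit every monomial `xᵃyᵇ`. The Euler operator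
`x∂ₓ` scales it by `a`, so `x∂ₓ − 1` hits it whenever `a ≠ 1`; and when `a ≥ 1`,
`xᵃyᵇ = x∂_y (xᵃ⁻¹yᵇ⁺¹/(b+1))`.
-/

open MvPolynomial

section

variable {σ K : Type*} [Field K] [CharZero K]

lemma monomial_eq_X_mul_pderiv_sub {i : σ} {s : σ →₀ ℕ} (hs : s i ≠ 1) (c : K) :
    monomial s c =
      X i * pderiv i (monomial s (c / (s i - 1))) - monomial s (c / (s i - 1)) := by
  have hs' : (s i : K) - 1 ≠ 0 := sub_ne_zero.mpr (by exact_mod_cast hs)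
  rw [X_mul_pderiv_monomial, ← map_nsmul, ← map_sub, nsmul_eq_mul]
  congr 1
  field_simp

lemma monomial_add_single_eq_X_mul_pderiv (i j : σ) (s : σ →₀ ℕ) (c : K) :
    monomial (s + Finsupp.single i 1) c =
      X i * pderiv j (monomial (s + Finsupp.single j 1) (c / (s j + 1))) := by
  have hs : (s j : K) + 1 ≠ 0 := by exact_mod_cast Nat.succ_ne_zero (s j)
  rw [pderiv_monomial, add_tsub_cancel_right, monomial_add_single, pow_one, mul_comm]
  congr 2
  simp only [Finsupp.add_apply, Finsupp.single_eq_same, Nat.cast_add, Nat.cast_one]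
  field_simp

end

noncomputable def poissonD1 : A × A →ₗ[ℂ] A where
  toFun p := X 0 * pderiv 0 p.1 + X 0 * pderiv 1 p.2 - p.1
  map_add' p q := by
    simp only [Prod.fst_add, Prod.snd_add, map_add]
    ring
  map_smul' c p := by
    simp only [Prod.smul_fst, Prod.smul_snd, Derivation.map_smul, RingHom.id_apply,
      mul_smul_comm, smul_add, smul_sub]

lemma monomial_mem_range_poissonD1 (d : Fin 2 →₀ ℕ) (c : ℂ) :
    monomial d c ∈ LinearMap.range poissonD1 := by
  by_cases hd : d 0 = 1
  · obtain ⟨s, rfl⟩ : ∃ s, d = s + Finsupp.single 0 1 :=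
      ⟨d - Finsupp.single 0 1, (tsub_add_cancel_of_le (by simp [hd])).symm⟩
    refine ⟨(0, monomial (s + Finsupp.single 1 1) (c / (s 1 + 1))), ?_⟩
    simp [poissonD1, monomial_add_single_eq_X_mul_pderiv 0 1 s c]
  · refine ⟨(monomial d (c / (d 0 - 1)), 0), ?_⟩
    simp [poissonD1, monomial_eq_X_mul_pderiv_sub hd c]

/-- The map `d¹(f₁,f₂) = x·∂_x f₁ + x·∂_y f₂ − f₁`, the top differential of the Poisson
complex of the bracket `{x,y} = x` on `ℂ[x,y]`, is surjective; hence the second Poisson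
cohomology space `H²_P` vanishes. -/
theorem d1_P_surjective :
    Function.Surjective
      (fun p : A × A => X 0 * pderiv 0 p.1 + X 0 * pderiv 1 p.2 - p.1) := by
  change Function.Surjective poissonD1
  rw [← LinearMap.range_eq_top, eq_top_iff]
  rintro g -
  induction g using MvPolynomial.induction_on' with
  | monomial d c => exact monomial_mem_range_poissonD1 d c
  | add p q hp hq => exact add_mem hp hq
end

section
/- For every g ∈ ℂ[x,y] there exists a unique polynomial p in the single variable y such that g − p lies in the image of the ℂ-linear map d¹ : ℂ[x,y]² → ℂ[x,y], d¹(f₁,f₂) = x²·∂_x f₁ + x·∂_y f₂ − x·f₁; hence the second logarithmic Poisson cohomology space H²_PS of the Poisson bracket {x,y} = x² on ℂ[x,y] is isomorphic to ℂ[y]. -/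
/-!
Every value of `d¹` is `x·(x∂ₓf₁ + ∂_y f₂ − f₁)`, and conversely `x·q = d¹(0, f₂)` for any
`y`-antiderivative `f₂` of `q`, so the image of `d¹` is exactly the ideal `(x)`. Since
`ℂ[x,y] = ℂ[y] ⊕ (x)`, with projection `g ↦ g(0, y)`, the class of `g` is represented by the
unique polynomial `g(0, y)`.
-/

open MvPolynomial

theorem MvPolynomial.pderiv_surjective_s12 {σ K : Type*} [Field K] [CharZero K] (i : σ) :
    Function.Surjective (pderiv i : MvPolynomial σ K → MvPolynomial σ K) := by
  intro q
  induction q using MvPolynomial.induction_on' with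
  | monomial s c =>
    refine ⟨X i * monomial s (c / (s i + 1)), ?_⟩
    have hne : (s i : K) + 1 ≠ 0 := Nat.cast_add_one_ne_zero (s i)
    rw [pderiv_mul, X_mul_pderiv_monomial, pderiv_X_self, one_mul, smul_monomial, ← map_add,
      nsmul_eq_mul]
    congr 1
    field_simp
    ring
  | add p q hp hq =>
    obtain ⟨f, rfl⟩ := hp
    obtain ⟨g, rfl⟩ := hq
    exact ⟨f + g, map_add _ f g⟩

section TwoVariables

variable {R : Type*} [CommRing R]

noncomputable def restrictYAxis : MvPolynomial (Fin 2) R →ₐ[R] Polynomial R :=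
  aeval ![0, Polynomial.X]

@[simp]
theorem restrictYAxis_X_zero : restrictYAxis (X 0 : MvPolynomial (Fin 2) R) = 0 := by
  simp [restrictYAxis]

@[simp]
theorem restrictYAxis_X_one : restrictYAxis (X 1 : MvPolynomial (Fin 2) R) = Polynomial.X := by
  simp [restrictYAxis]

@[simp]
theorem restrictYAxis_aeval_X_one (p : Polynomial R) :
    restrictYAxis (Polynomial.aeval (X 1 : MvPolynomial (Fin 2) R) p) = p := by
  rw [← Polynomial.aeval_algHom_apply, restrictYAxis_X_one, Polynomial.aeval_X_left_apply]

theorem X_zero_dvd_sub_aeval_restrictYAxis (g : MvPolynomial (Fin 2) R) :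
    X 0 ∣ g - Polynomial.aeval (X 1) (restrictYAxis g) := by
  induction g using MvPolynomial.induction_on with
  | C a => simp
  | add p q hp hq => simpa [add_sub_add_comm] using dvd_add hp hq
  | mul_X p j hp =>
    fin_cases j
    · simp
    · simpa [← sub_mul] using dvd_mul_of_dvd_left hp (X 1)

theorem X_zero_dvd_sub_aeval_iff {g : MvPolynomial (Fin 2) R} {p : Polynomial R} :
    X 0 ∣ g - Polynomial.aeval (X 1) p ↔ p = restrictYAxis g := by
  refine ⟨fun ⟨q, hq⟩ => ?_, fun hp => hp ▸ X_zero_dvd_sub_aeval_restrictYAxis g⟩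
  have hq' : restrictYAxis g - p = 0 := by simpa using congrArg restrictYAxis hq
  exact (sub_eq_zero.1 hq').symm

end TwoVariables

theorem exists_eq_d1_iff_X_zero_dvd {K : Type*} [Field K] [CharZero K]
    (h : MvPolynomial (Fin 2) K) :
    (∃ f₁ f₂ : MvPolynomial (Fin 2) K,
      h = X 0 ^ 2 * pderiv 0 f₁ + X 0 * pderiv 1 f₂ - X 0 * f₁) ↔ X 0 ∣ h := by
  constructor
  · rintro ⟨f₁, f₂, rfl⟩
    exact ⟨X 0 * pderiv 0 f₁ + pderiv 1 f₂ - f₁, by ring⟩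
  · rintro ⟨q, rfl⟩
    obtain ⟨f₂, rfl⟩ := pderiv_surjective_s12 1 q
    exact ⟨0, f₂, by simp⟩

/-- For every `g ∈ ℂ[x,y]` there is a unique one-variable polynomial `p` such that
`g − p(y)` lies in the image of `d¹(f₁,f₂) = x²·∂_x f₁ + x·∂_y f₂ − x·f₁`, the top
differential of the logarithmic Poisson complex of `{x,y} = x²` along `(x²)`; hence
the second logarithmic Poisson cohomology `H²_PS` of `{x,y} = x²` is isomorphic to `ℂ[y]`. -/
theorem H2_PS_xsq_eq_Cy (g : A) :
    ∃! p : Polynomial ℂ, ∃ f₁ f₂ : A,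
      g - Polynomial.aeval (X 1 : A) p =
        X 0 ^ 2 * pderiv 0 f₁ + X 0 * pderiv 1 f₂ - X 0 * f₁ := by
  simp_rw [exists_eq_d1_iff_X_zero_dvd, X_zero_dvd_sub_aeval_iff]
  exact existsUnique_eq
end

section
/- For every pair (f₁,f₂) ∈ ℂ[x,y]² satisfying x²·∂_x f₁ + x²·∂_y f₂ − 2x·f₁ = 0, there exist a polynomial g ∈ ℂ[x,y] and a unique triple consisting of a one-variable polynomial p and constants a₀, a₁ ∈ ℂ such that f₁ = x²·∂_y g + x·p(y) and f₂ = −x²·∂_x g + P(y) + a₀ + a₁·x, where P is the antiderivative of p with zero constant term; hence the first Poisson cohomology space H¹_P of the Poisson bracket {x,y} = x² on ℂ[x,y] is isomorphic to ℂ[y] ⊕ ℂ₁[x]. -/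
/-!
Work in `ℂ[y][x]` and write `f₁ = ∑ uₖ(y) xᵏ`, `f₂ = ∑ vₖ(y) xᵏ`. The coefficient of `x^(k+2)` in
the cocycle equation reads `vₖ' = (1 - k) u_{k+1}`, and that of `x` gives `u₀ = 0`; in particular
`v₀' = u₁` and `v₁` is constant. Taking `g = c(y) - W` with `c' = u₂` and
`∂ₓW = (f₂ - v₀ - v₁ x) / x²` (antiderivatives exist in characteristic zero), the cocycle minus the
coboundary of `g` is `(x u₁(y), v₀(y) + v₁ x)`. Coboundaries `(x² ∂_y g, -x² ∂ₓ g)` have no terms of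
`x`-degree `0` or `1`, so the data `u₁`, `v₀(0)`, `v₁` are read off from `(f₁, f₂)`: this is uniqueness.
-/

open MvPolynomial

namespace Polynomial

theorem exists_antiderivative {R : Type*} [Semiring R] [Algebra ℚ R] (p : R[X]) :
    ∃ q : R[X], derivative q = p ∧ q.coeff 0 = 0 := by
  induction p using Polynomial.induction_on' with
  | add p q hp hq =>
    obtain ⟨P, hP, hP0⟩ := hp
    obtain ⟨Q, hQ, hQ0⟩ := hq
    exact ⟨P + Q, by rw [derivative_add, hP, hQ], by rw [coeff_add, hP0, hQ0, add_zero]⟩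
  | monomial n a =>
    refine ⟨monomial (n + 1) (((n : ℚ) + 1)⁻¹ • a), ?_, by simp⟩
    rw [derivative_monomial, Nat.add_sub_cancel]
    congr 1
    rw [← map_natCast (algebraMap ℚ R), ← Algebra.commutes, Algebra.smul_def, ← mul_assoc,
      ← map_mul, Nat.cast_succ, mul_inv_cancel₀ (by positivity), map_one, one_mul]

theorem X_sq_mul_divX_divX_add {R : Type*} [CommSemiring R] (p : R[X]) :
    X ^ 2 * divX (divX p) + C (p.coeff 1) * X + C (p.coeff 0) = p := by
  conv_rhs => rw [← X_mul_divX_add p, ← X_mul_divX_add (divX p)]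
  rw [coeff_divX]
  ring

section CommRing

variable {R : Type*} [CommRing R]

noncomputable def derivativeCoeffs (p : R[X][X]) : R[X][X] :=
  PolynomialModule.equivPolynomialSelf (derivative'.mapCoeffs p)

@[simp] lemma coeff_derivativeCoeffs (p : R[X][X]) (n : ℕ) :
    (derivativeCoeffs p).coeff n = derivative (p.coeff n) := rfl

/-- The cocycle condition of the Poisson complex of `{x, y} = x²` on `R[y][x]`: the outer variable
is `x`, so `derivative` is `∂ₓ` and `derivativeCoeffs` is `∂_y`. -/
def IsPoissonCocycle (f₁ f₂ : R[X][X]) : Prop :=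
  X ^ 2 * derivative f₁ + X ^ 2 * derivativeCoeffs f₂ - 2 * X * f₁ = 0

/-- `(f₁, f₂) = d⁰g + (x p(y), P(y) + a₀ + a₁ x)` for some `g`, where `t = (p, a₀, a₁)` and `P` is
the antiderivative of `p` vanishing at `0`. -/
def HasNormalForm (f₁ f₂ : R[X][X]) (t : R[X] × R × R) : Prop :=
  ∃ (g : R[X][X]) (P : R[X]), P.derivative = t.1 ∧ P.coeff 0 = 0 ∧
    f₁ = X ^ 2 * derivativeCoeffs g + X * C t.1 ∧
    f₂ = -(X ^ 2 * derivative g) + C P + C (C t.2.1) + C (C t.2.2) * X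

theorem HasNormalForm.eq_coeffs {f₁ f₂ : R[X][X]} {t : R[X] × R × R}
    (h : HasNormalForm f₁ f₂ t) :
    t = (f₁.coeff 1, (f₂.coeff 0).coeff 0, (f₂.coeff 1).coeff 0) := by
  obtain ⟨g, P, -, hP0, rfl, rfl⟩ := h
  ext <;> simp [coeff_X_pow_mul', hP0]

theorem IsPoissonCocycle.derivative_coeff {f₁ f₂ : R[X][X]} (h : IsPoissonCocycle f₁ f₂)
    (k : ℕ) : derivative (f₂.coeff k) = (1 - k) * f₁.coeff (k + 1) := by
  have hk := congrArg (coeff · (k + 2)) h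
  simp only [mul_assoc, coeff_sub, coeff_add, coeff_X_pow_mul', le_add_iff_nonneg_left, zero_le,
    ↓reduceIte, add_tsub_cancel_right, coeff_derivative, coeff_derivativeCoeffs, coeff_ofNat_mul,
    coeff_X_mul, coeff_zero] at hk
  linear_combination hk

end CommRing

section Field

variable {K : Type*} [Field K] [CharZero K] {f₁ f₂ : K[X][X]}

theorem IsPoissonCocycle.coeff_zero (h : IsPoissonCocycle f₁ f₂) : f₁.coeff 0 = 0 := by
  simpa [coeff_X_pow_mul', mul_assoc] using congrArg (coeff · 1) h

theorem IsPoissonCocycle.hasNormalForm (h : IsPoissonCocycle f₁ f₂) :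
    HasNormalForm f₁ f₂ (f₁.coeff 1, (f₂.coeff 0).coeff 0, (f₂.coeff 1).coeff 0) := by
  have hv := h.derivative_coeff
  obtain ⟨c, hc, -⟩ := exists_antiderivative (f₁.coeff 2)
  obtain ⟨W, hW, hW₀⟩ := exists_antiderivative (divX (divX f₂))
  have hv₁ : f₂.coeff 1 = C ((f₂.coeff 1).coeff 0) :=
    eq_C_of_derivative_eq_zero (by simpa using hv 1)
  have hW_coeff (n : ℕ) : derivative (W.coeff (n + 1)) = -f₁.coeff (n + 3) := by
    have hn := congrArg (fun p => derivative (p.coeff n)) hW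
    simp only [coeff_derivative, coeff_divX, derivative_mul, derivative_add, derivative_natCast,
      derivative_one, hv] at hn
    refine mul_right_cancel₀ (Nat.cast_add_one_ne_zero n : ((n : K[X]) + 1) ≠ 0) ?_
    push_cast at hn
    linear_combination hn
  refine ⟨C c - W, f₂.coeff 0 - C ((f₂.coeff 0).coeff 0), by simpa using hv 0, by simp, ?_, ?_⟩
  · ext1 k
    rcases k with _ | _ | _ | n
    · simp [h.coeff_zero]
    · simp [coeff_X_pow_mul']
    · simp [coeff_X_pow_mul', hc, hW₀]
    · simp [coeff_X_pow_mul', hW_coeff]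
  · rw [derivative_sub, derivative_C, zero_sub, hW]
    conv_lhs => rw [← X_sq_mul_divX_divX_add f₂, hv₁]
    simp only [map_sub]
    ring

theorem IsPoissonCocycle.existsUnique_hasNormalForm (h : IsPoissonCocycle f₁ f₂) :
    ∃! t, HasNormalForm f₁ f₂ t :=
  ⟨_, h.hasNormalForm, fun _ ht => ht.eq_coeffs⟩

end Field

end Polynomial

namespace MvPolynomial

open scoped Polynomial
open Polynomial (derivative derivativeCoeffs IsPoissonCocycle HasNormalForm)

/-- Unlike `Polynomial.Bivariate.equivMvPolynomial`, this sends the outer variable to `X 0` and the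
inner one to `X 1`. -/
noncomputable def bivariateEquiv (R : Type*) [CommRing R] :
    R[X][X] ≃ₐ[R] MvPolynomial (Fin 2) R :=
  (Polynomial.Bivariate.equivMvPolynomial R).trans (renameEquiv R (Equiv.swap 0 1))

variable {R : Type*} [CommRing R]

@[simp] lemma bivariateEquiv_X : bivariateEquiv R Polynomial.X = X 0 := by
  simp [bivariateEquiv]

@[simp] lemma bivariateEquiv_C (p : R[X]) :
    bivariateEquiv R (Polynomial.C p) = Polynomial.aeval (X 1) p := by
  induction p using Polynomial.induction_on' with
  | add p q hp hq => simp [hp, hq]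
  | monomial n a => simp [bivariateEquiv, ← Polynomial.C_mul_X_pow_eq_monomial]

lemma pderiv_zero_bivariateEquiv (p : R[X][X]) :
    pderiv 0 (bivariateEquiv R p) = bivariateEquiv R (derivative p) := by
  have h := pderiv_rename (Equiv.swap (0 : Fin 2) 1).injective 1
    (Polynomial.Bivariate.equivMvPolynomial R p)
  rwa [Equiv.swap_apply_right, Polynomial.Bivariate.pderiv_one_equivMvPolynomial] at h

lemma pderiv_one_bivariateEquiv (p : R[X][X]) :
    pderiv 1 (bivariateEquiv R p) = bivariateEquiv R (derivativeCoeffs p) := by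
  have h := pderiv_rename (Equiv.swap (0 : Fin 2) 1).injective 0
    (Polynomial.Bivariate.equivMvPolynomial R p)
  rwa [Equiv.swap_apply_left, Polynomial.Bivariate.pderiv_zero_equivMvPolynomial] at h

theorem isPoissonCocycle_iff (f₁ f₂ : R[X][X]) :
    X 0 ^ 2 * pderiv 0 (bivariateEquiv R f₁) + X 0 ^ 2 * pderiv 1 (bivariateEquiv R f₂)
      - 2 * X 0 * bivariateEquiv R f₁ = 0 ↔ IsPoissonCocycle f₁ f₂ := by
  rw [IsPoissonCocycle, ← (bivariateEquiv R).injective.eq_iff, map_zero]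
  simp [pderiv_zero_bivariateEquiv, pderiv_one_bivariateEquiv, map_ofNat]

theorem hasNormalForm_iff (f₁ f₂ : R[X][X]) (t : R[X] × R × R) :
    (∃ (g : MvPolynomial (Fin 2) R) (P : R[X]), P.derivative = t.1 ∧ P.coeff 0 = 0 ∧
      bivariateEquiv R f₁ = X 0 ^ 2 * pderiv 1 g + X 0 * Polynomial.aeval (X 1) t.1 ∧
      bivariateEquiv R f₂ = -(X 0 ^ 2 * pderiv 0 g) + Polynomial.aeval (X 1) P
        + C t.2.1 + C t.2.2 * X 0) ↔ HasNormalForm f₁ f₂ t := by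
  rw [HasNormalForm, (bivariateEquiv R).surjective.exists]
  simp only [← (bivariateEquiv R).injective.eq_iff, map_add, map_mul, map_neg, map_pow,
    bivariateEquiv_X, bivariateEquiv_C, Polynomial.aeval_C, algebraMap_eq,
    pderiv_zero_bivariateEquiv, pderiv_one_bivariateEquiv]

end MvPolynomial

/-- For every cocycle `(f₁,f₂)` of the Poisson complex of `{x,y} = x²`
(i.e. `x²·∂_x f₁ + x²·∂_y f₂ − 2x·f₁ = 0`), there exist `g ∈ ℂ[x,y]` and a unique triple
`(p, a₀, a₁)` — a one-variable polynomial `p` and constants `a₀, a₁ ∈ ℂ` — such that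
`f₁ = x²·∂_y g + x·p(y)` and `f₂ = −x²·∂_x g + P(y) + a₀ + a₁·x`, where `P` is the
antiderivative of `p` with zero constant term; hence the first Poisson cohomology
`H¹_P` of `{x,y} = x²` is isomorphic to `ℂ[y] ⊕ ℂ₁[x]`. -/
theorem H1_P_xsq (f₁ f₂ : A)
    (h : X 0 ^ 2 * pderiv 0 f₁ + X 0 ^ 2 * pderiv 1 f₂ - 2 * X 0 * f₁ = 0) :
    ∃! t : Polynomial ℂ × ℂ × ℂ, ∃ (g : A) (P : Polynomial ℂ),
      P.derivative = t.1 ∧ P.coeff 0 = 0 ∧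
      f₁ = X 0 ^ 2 * pderiv 1 g + X 0 * Polynomial.aeval (X 1 : A) t.1 ∧
      f₂ = -(X 0 ^ 2 * pderiv 0 g) + Polynomial.aeval (X 1 : A) P
            + C t.2.1 + C t.2.2 * X 0 := by
  obtain ⟨f₁, rfl⟩ := (bivariateEquiv ℂ).surjective f₁
  obtain ⟨f₂, rfl⟩ := (bivariateEquiv ℂ).surjective f₂
  simp_rw [hasNormalForm_iff]
  exact ((isPoissonCocycle_iff f₁ f₂).1 h).existsUnique_hasNormalForm
end
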